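/- Reconstruction of the transitive closure: Let V be a finite type and r : V → V → Prop an acyclic relation (a DAG). Define E(L) = {(x, y) : x precedes y in L} for a topological ordering L of (V, r). Then the intersection of E(L) over ALL topological orderings L of (V, r) equals the edge set of the transitive closure G⁺, i.e. for all x y : V, (x precedes y in every topological ordering of (V, r)) ↔ Relation.TransGen r x y. -/

import Mathlib

/-!
Every topological ordering contains `TransGen r`, because it is transitive. Conversely, acyclicity
makes `TransGen r` a strict order, and a strict order is the intersection of its strict linear
extensions: if `x ≠ y` are not related, adjoining all pairs `(a, b)` with `a ≤ y` and `x ≤ b` still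
gives a strict order, and any linear extension of it (Szpilrajn) puts `y` before `x`.
-/

open Relation

section StrictExtension

variable {α : Type*} {r : α → α → Prop} [IsStrictOrder α r]

variable (r) in
theorem exists_isStrictTotalOrder_extension :
    ∃ s : α → α → Prop, IsStrictTotalOrder α s ∧ r ≤ s := by
  let := partialOrderOfSO r
  have hinj : Function.Injective (toLinearExtension : α →o LinearExtension α) := fun _ _ h ↦ h
  exact ⟨Function.onFun (· < ·) toLinearExtension, hinj.isStrictTotalOrder_onFun _,
    fun _ _ h ↦ toLinearExtension.monotone.strictMono_of_injective hinj h⟩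

theorem exists_isStrictTotalOrder_extension_of_not_rel {x y : α} (hne : x ≠ y) (hxy : ¬ r x y) :
    ∃ s : α → α → Prop, IsStrictTotalOrder α s ∧ r ≤ s ∧ s y x := by
  let := partialOrderOfSO r
  let r' (a b : α) := a < b ∨ a ≤ y ∧ x ≤ b
  have : IsStrictOrder α r' :=
    { irrefl a := by
        rintro (h | ⟨hay, hxa⟩)
        · exact lt_irrefl a h
        · exact (hxa.trans hay).lt_or_eq.elim hxy hne
      trans a b c := by
        rintro (hab | ⟨hay, hxb⟩) (hbc | ⟨hby, hxc⟩)
        · exact .inl (hab.trans hbc)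
        · exact .inr ⟨hab.le.trans hby, hxc⟩
        · exact .inr ⟨hay, hxb.trans hbc.le⟩
        · exact .inr ⟨hay, hxc⟩ }
  obtain ⟨s, hs, hr's⟩ := exists_isStrictTotalOrder_extension r'
  exact ⟨s, hs, fun a b h ↦ hr's a b (.inl h), hr's y x (.inr ⟨le_rfl, le_rfl⟩)⟩

theorem forall_isStrictTotalOrder_extension_iff {x y : α} :
    (∀ s : α → α → Prop, IsStrictTotalOrder α s → r ≤ s → s x y) ↔ r x y := by
  refine ⟨fun h ↦ ?_, fun hxy s _ hrs ↦ hrs x y hxy⟩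
  by_contra hxy
  obtain rfl | hne := eq_or_ne x y
  · obtain ⟨s, hs, hrs⟩ := exists_isStrictTotalOrder_extension r
    exact irrefl x (h s hs hrs)
  · obtain ⟨s, hs, hrs, hyx⟩ := exists_isStrictTotalOrder_extension_of_not_rel hne hxy
    exact asymm (h s hs hrs) hyx

end StrictExtension

theorem stmt_3_general {V : Type*} (r : V → V → Prop)
    (hacyc : ∀ x, ¬ Relation.TransGen r x x) :
    ∀ x y : V,
      (∀ L : V → V → Prop, IsStrictTotalOrder V L →
        (∀ a b, r a b → L a b) → L x y) ↔ Relation.TransGen r x y := by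
  have : IsStrictOrder V (TransGen r) := { irrefl := hacyc }
  intro x y
  rw [← forall_isStrictTotalOrder_extension_iff (r := TransGen r)]
  refine forall_congr' fun L ↦ forall_congr' fun _ ↦ ?_
  exact imp_congr_left ⟨fun h ↦ transGen_minimal h, fun h a b hab ↦ h a b (.single hab)⟩

/-- Reconstruction of the transitive closure: for a finite DAG `(V, r)`,
`x` precedes `y` in every topological ordering of `(V, r)` iff there is a
directed path from `x` to `y` (i.e. `(x, y)` is an edge of the transitive
closure `G⁺`). Hence the intersection of the edge sets of all topological
orderings is exactly the edge set of `G⁺`. -/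
theorem stmt_3 {V : Type*} [Fintype V] (r : V → V → Prop)
    (hacyc : ∀ x, ¬ Relation.TransGen r x x) :
    ∀ x y : V,
      (∀ L : V → V → Prop, IsStrictTotalOrder V L →
        (∀ a b, r a b → L a b) → L x y) ↔ Relation.TransGen r x y :=
  stmt_3_general r hacyc
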